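/- Let q, λ ∈ ℂ with |q| < 1, 0 < |λ| < 1 and 1 + λ² ≠ 0. Assume φ(λ,q²) ≠ 0 and (1+λ²) φ(λ,q²) ≠ λ²(1−q) φ(λ,q³). Then 1 / (1 − λ²(1−q) φ(λ,q³) / ((1+λ²) φ(λ,q²))) = (1+λ²)·(1 − (1+λ²) Σ_{k=0}^∞ (−iλ)^k/(1 − iλ q^k)) / (λ²(1−q)), the series on the right converging absolutely. -/

import Mathlib

/-!
Put `a = iλ`, so that `-λ² = a²`, `(-λ²;q²)_k = (a;q)_k (-a;q)_k` and `φ(λ,x) = ₂φ₁(a,-a;-a²q;q,x)`.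
The `q`-binomial series `Φ_b(w) = Σ (b;q)_n/(q;q)_n wⁿ` satisfies `(1-w) Φ_b(w) = (1-bw) Φ_b(qw)`,
hence `Φ_b(w) (w;q)_n = (bw;q)_n Φ_b(qⁿw)`, and `Φ_b(w) ≠ 0` because `Φ_b(qⁿw) → 1`.
Writing `(-a;q)_n/(-a²q;q)_n = Φ_{aq}(-aqⁿ)/Φ_{aq}(-a)` and swapping the resulting double sum gives
Heine's transformation `Φ_{aq}(-a) φ(λ,x) = Σ_m (aq;q)_m/(q;q)_m (-a)^m Φ_a(q^m x)`.
At `x = q²` and `x = q³` the products telescope: with `w_k = (1-q^k)/(1-aq^k)`, up to one common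
nonzero factor, `φ(λ,q²)` is `T₁ = Σ (-a)^k w_{k+1}` and `φ(λ,q³)` is
`T₂ = Σ (-a)^k w_{k+1} w_{k+2}`. Partial fractions in `q^k` and an index shift give
`(1-a²) Σ (-a)^k/(1-aq^k) = 1 + a²(1+a) T₁` and `(1+a) ((1-a²) T₁ + a²(1-q) T₂) = 1-q`,
and the claimed identity is a consequence of these two.
-/

open Complex

/-- The `q`-Pochhammer symbol `(a;q)_k = ∏_{j=0}^{k-1} (1 - a q^j)`. -/
noncomputable def qPoch (a q : ℂ) (k : ℕ) : ℂ := ∏ j ∈ Finset.range k, (1 - a * q ^ j)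

/-- `φ(λ,x) = Σ_k (-λ²;q²)_k x^k / ((q;q)_k (λ²q;q)_k) = ₂φ₁(iλ, -iλ; λ²q; q, x)`. -/
noncomputable def phi (q lam x : ℂ) : ℂ :=
  ∑' k : ℕ, qPoch (-lam ^ 2) (q ^ 2) k * x ^ k / (qPoch q q k * qPoch (lam ^ 2 * q) q k)

open Filter Topology

lemma qPoch_zero (a q : ℂ) : qPoch a q 0 = 1 := Finset.prod_range_zero _

lemma qPoch_succ (a q : ℂ) (n : ℕ) : qPoch a q (n + 1) = qPoch a q n * (1 - a * q ^ n) :=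
  Finset.prod_range_succ _ _

lemma qPoch_mul_one_sub (a q : ℂ) (n : ℕ) :
    qPoch (a * q) q n * (1 - a) = qPoch a q n * (1 - a * q ^ n) := by
  induction n with
  | zero => simp [qPoch_zero]
  | succ n ih =>
    rw [qPoch_succ, qPoch_succ]
    linear_combination (1 - a * q * q ^ n) * ih

lemma norm_mul_pow_le {a q : ℂ} (hq : ‖q‖ ≤ 1) (k : ℕ) : ‖a * q ^ k‖ ≤ ‖a‖ := by
  rw [norm_mul, norm_pow]
  exact mul_le_of_le_one_right (norm_nonneg a) (pow_le_one₀ (norm_nonneg q) hq)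

lemma one_sub_norm_le_norm_one_sub_mul_pow {a q : ℂ} (hq : ‖q‖ ≤ 1) (k : ℕ) :
    1 - ‖a‖ ≤ ‖1 - a * q ^ k‖ := by
  have := norm_sub_norm_le (1 : ℂ) (a * q ^ k)
  rw [norm_one] at this
  linarith [norm_mul_pow_le (a := a) hq k]

lemma one_sub_mul_pow_ne_zero {a q : ℂ} (ha : ‖a‖ < 1) (hq : ‖q‖ ≤ 1) (k : ℕ) :
    1 - a * q ^ k ≠ 0 :=
  norm_pos_iff.mp <| (sub_pos.mpr ha).trans_le (one_sub_norm_le_norm_one_sub_mul_pow hq k)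

lemma qPoch_ne_zero {a q : ℂ} (ha : ‖a‖ < 1) (hq : ‖q‖ ≤ 1) (n : ℕ) : qPoch a q n ≠ 0 :=
  Finset.prod_ne_zero_iff.mpr fun k _ => one_sub_mul_pow_ne_zero ha hq k

lemma sum_range_pow_le {r : ℝ} (hr0 : 0 ≤ r) (hr : r < 1) (n : ℕ) :
    ∑ j ∈ Finset.range n, r ^ j ≤ 1 / (1 - r) := by
  simpa using geom_sum_Ico_le_of_lt_one (m := 0) (n := n) hr0 hr

lemma norm_qPoch_le {a q : ℂ} (hq : ‖q‖ < 1) (n : ℕ) :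
    ‖qPoch a q n‖ ≤ Real.exp (‖a‖ / (1 - ‖q‖)) := by
  calc ‖qPoch a q n‖ = ∏ j ∈ Finset.range n, ‖1 - a * q ^ j‖ := by rw [qPoch, norm_prod]
    _ ≤ ∏ j ∈ Finset.range n, Real.exp (‖a‖ * ‖q‖ ^ j) := by
      refine Finset.prod_le_prod (fun _ _ => norm_nonneg _) fun j _ => ?_
      calc ‖1 - a * q ^ j‖ ≤ ‖(1 : ℂ)‖ + ‖a * q ^ j‖ := norm_sub_le _ _
        _ = ‖a‖ * ‖q‖ ^ j + 1 := by rw [norm_one, norm_mul, norm_pow, add_comm]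
        _ ≤ Real.exp (‖a‖ * ‖q‖ ^ j) := Real.add_one_le_exp _
    _ = Real.exp (‖a‖ * ∑ j ∈ Finset.range n, ‖q‖ ^ j) := by rw [← Real.exp_sum, Finset.mul_sum]
    _ ≤ Real.exp (‖a‖ / (1 - ‖q‖)) := by
      rw [Real.exp_le_exp, div_eq_mul_one_div]
      exact mul_le_mul_of_nonneg_left (sum_range_pow_le (norm_nonneg q) hq n) (norm_nonneg a)

lemma exp_neg_div_le_one_sub {t s : ℝ} (ht0 : 0 ≤ t) (hts : t ≤ s) (hs : s < 1) :
    Real.exp (-(t / (1 - s))) ≤ 1 - t := by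
  have ht : 0 < 1 - t := by linarith
  rw [← Real.le_log_iff_exp_le ht]
  calc -(t / (1 - s)) ≤ -(t / (1 - t)) :=
        neg_le_neg (div_le_div_of_nonneg_left ht0 (by linarith) (by linarith))
    _ = 1 - (1 - t)⁻¹ := by field_simp; ring
    _ ≤ Real.log (1 - t) := Real.one_sub_inv_le_log_of_pos ht

lemma exp_neg_le_norm_qPoch {a q : ℂ} (ha : ‖a‖ < 1) (hq : ‖q‖ < 1) (n : ℕ) :
    Real.exp (-(‖a‖ / ((1 - ‖a‖) * (1 - ‖q‖)))) ≤ ‖qPoch a q n‖ := by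
  have hq0 := norm_nonneg q
  calc Real.exp (-(‖a‖ / ((1 - ‖a‖) * (1 - ‖q‖))))
      ≤ Real.exp (-(‖a‖ / (1 - ‖a‖) * ∑ j ∈ Finset.range n, ‖q‖ ^ j)) := by
        rw [Real.exp_le_exp, neg_le_neg_iff, ← div_div, div_eq_mul_one_div (‖a‖ / (1 - ‖a‖))]
        exact mul_le_mul_of_nonneg_left (sum_range_pow_le hq0 hq n)
          (div_nonneg (norm_nonneg a) (sub_pos.mpr ha).le)
    _ = ∏ j ∈ Finset.range n, Real.exp (-(‖a * q ^ j‖ / (1 - ‖a‖))) := by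
        rw [← Real.exp_sum, Finset.mul_sum, ← Finset.sum_neg_distrib]
        simp only [norm_mul, norm_pow, mul_div_right_comm]
    _ ≤ ∏ j ∈ Finset.range n, ‖1 - a * q ^ j‖ := by
        refine Finset.prod_le_prod (fun _ _ => (Real.exp_pos _).le) fun j _ => ?_
        calc Real.exp (-(‖a * q ^ j‖ / (1 - ‖a‖))) ≤ 1 - ‖a * q ^ j‖ :=
              exp_neg_div_le_one_sub (norm_nonneg _) (norm_mul_pow_le hq.le j) ha
          _ ≤ ‖1 - a * q ^ j‖ := by simpa using norm_sub_norm_le (1 : ℂ) (a * q ^ j)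
    _ = ‖qPoch a q n‖ := by rw [qPoch, norm_prod]

noncomputable def qBinomialCoeff (a q : ℂ) (n : ℕ) : ℂ := qPoch a q n / qPoch q q n

noncomputable def qBinomialSeries (a q w : ℂ) : ℂ := ∑' n : ℕ, qBinomialCoeff a q n * w ^ n

lemma qBinomialCoeff_zero (a q : ℂ) : qBinomialCoeff a q 0 = 1 := by
  simp [qBinomialCoeff, qPoch_zero]

lemma qBinomialCoeff_succ_mul (a : ℂ) {q : ℂ} (hq : ‖q‖ < 1) (n : ℕ) :
    qBinomialCoeff a q (n + 1) * (1 - q ^ (n + 1)) = qBinomialCoeff a q n * (1 - a * q ^ n) := by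
  have hqn := qPoch_ne_zero hq hq.le n
  have hq1 : 1 - q ^ (n + 1) ≠ 0 := by
    rw [pow_succ']; exact one_sub_mul_pow_ne_zero hq hq.le n
  rw [qBinomialCoeff, qBinomialCoeff, qPoch_succ, qPoch_succ, ← pow_succ']
  field_simp

lemma exists_norm_qBinomialCoeff_le (a : ℂ) {q : ℂ} (hq : ‖q‖ < 1) :
    ∃ C, ∀ n, ‖qBinomialCoeff a q n‖ ≤ C :=
  ⟨Real.exp (‖a‖ / (1 - ‖q‖)) / Real.exp (-(‖q‖ / ((1 - ‖q‖) * (1 - ‖q‖)))), fun n => by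
    rw [qBinomialCoeff, norm_div]
    exact div_le_div₀ (Real.exp_pos _).le (norm_qPoch_le hq n) (Real.exp_pos _)
      (exp_neg_le_norm_qPoch hq hq n)⟩

lemma summable_norm_pow_mul_of_norm_le {b : ℂ} {f : ℕ → ℂ} {C : ℝ} (hb : ‖b‖ < 1)
    (hf : ∀ k, ‖f k‖ ≤ C) : Summable fun k => ‖b ^ k * f k‖ := by
  refine .of_nonneg_of_le (fun _ => norm_nonneg _) (fun k => ?_)
    ((summable_geometric_of_lt_one (norm_nonneg b) hb).mul_right C)
  rw [norm_mul, norm_pow]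
  exact mul_le_mul_of_nonneg_left (hf k) (pow_nonneg (norm_nonneg b) k)

lemma summable_qBinomialCoeff_mul_pow (a : ℂ) {q w : ℂ} (hq : ‖q‖ < 1) (hw : ‖w‖ < 1) :
    Summable fun n => qBinomialCoeff a q n * w ^ n := by
  obtain ⟨C, hC⟩ := exists_norm_qBinomialCoeff_le a hq
  simpa only [mul_comm] using (summable_norm_pow_mul_of_norm_le hw hC).of_norm

lemma qBinomialSeries_zero (a q : ℂ) : qBinomialSeries a q 0 = 1 := by
  rw [qBinomialSeries, tsum_eq_single 0 fun n hn => by simp [hn]]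
  simp [qBinomialCoeff_zero]

lemma continuousAt_qBinomialSeries_zero (a : ℂ) {q : ℂ} (hq : ‖q‖ < 1) :
    ContinuousAt (qBinomialSeries a q) 0 := by
  obtain ⟨C, hC⟩ := exists_norm_qBinomialCoeff_le a hq
  have hcont : ContinuousOn (qBinomialSeries a q) (Metric.closedBall 0 (1 / 2)) := by
    refine continuousOn_tsum (fun n => (continuous_const.mul (continuous_pow n)).continuousOn)
      ((summable_geometric_two).mul_left C) fun n w hw => ?_
    rw [mem_closedBall_zero_iff] at hw
    rw [norm_mul, norm_pow]
    exact mul_le_mul (hC n) (pow_le_pow_left₀ (norm_nonneg w) hw n) (by positivity)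
      ((norm_nonneg _).trans (hC n))
  exact hcont.continuousAt (Metric.closedBall_mem_nhds 0 (by norm_num))

lemma one_sub_mul_qBinomialSeries (a : ℂ) {q w : ℂ} (hq : ‖q‖ < 1) (hw : ‖w‖ < 1) :
    (1 - w) * qBinomialSeries a q w = (1 - a * w) * qBinomialSeries a q (q * w) := by
  set c := qBinomialCoeff a q
  have hqw : ‖q * w‖ < 1 := by
    rw [norm_mul]; exact mul_lt_one_of_nonneg_of_lt_one_left (norm_nonneg q) hq hw.le
  have hf := summable_qBinomialCoeff_mul_pow a hq hw
  have hg := summable_qBinomialCoeff_mul_pow a hq hqw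
  have h1 : ∑' n, c n * (1 - q ^ n) * w ^ n
      = qBinomialSeries a q w - qBinomialSeries a q (q * w) := by
    rw [qBinomialSeries, qBinomialSeries, ← hf.tsum_sub hg]
    exact tsum_congr fun n => by ring
  have h2 : ∑' n, c n * (1 - a * q ^ n) * w ^ n
      = qBinomialSeries a q w - a * qBinomialSeries a q (q * w) := by
    rw [qBinomialSeries, qBinomialSeries, ← tsum_mul_left, ← hf.tsum_sub (hg.mul_left a)]
    exact tsum_congr fun n => by ring
  -- the coefficient recurrence makes the first series the shift of the second
  have h3 : ∑' n, c n * (1 - q ^ n) * w ^ n = w * ∑' n, c n * (1 - a * q ^ n) * w ^ n := by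
    have hs : Summable fun n => c n * (1 - q ^ n) * w ^ n :=
      (hf.sub hg).congr fun n => by ring
    rw [hs.tsum_eq_zero_add, ← tsum_mul_left]
    simp only [pow_zero, sub_self, mul_zero, zero_mul, zero_add]
    exact tsum_congr fun n => by rw [qBinomialCoeff_succ_mul a hq n]; ring
  linear_combination h3 - h1 + w * h2

lemma norm_pow_mul_lt_one {q w : ℂ} (hq : ‖q‖ ≤ 1) (hw : ‖w‖ < 1) (n : ℕ) : ‖q ^ n * w‖ < 1 := by
  rw [mul_comm]; exact (norm_mul_pow_le hq n).trans_lt hw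

lemma qBinomialSeries_mul_qPoch (a : ℂ) {q w : ℂ} (hq : ‖q‖ < 1) (hw : ‖w‖ < 1) (n : ℕ) :
    qBinomialSeries a q w * qPoch w q n = qPoch (a * w) q n * qBinomialSeries a q (q ^ n * w) := by
  induction n with
  | zero => simp [qPoch_zero]
  | succ n ih =>
    have h := one_sub_mul_qBinomialSeries a hq (norm_pow_mul_lt_one hq.le hw n)
    rw [qPoch_succ, qPoch_succ, ← mul_assoc, ih, pow_succ', mul_assoc q]
    linear_combination qPoch (a * w) q n * h

lemma qBinomialSeries_ne_zero (a : ℂ) {q w : ℂ} (hq : ‖q‖ < 1) (hw : ‖w‖ < 1)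
    (haw : ‖a * w‖ < 1) : qBinomialSeries a q w ≠ 0 := by
  intro h0
  have hzero : ∀ n : ℕ, qBinomialSeries a q (q ^ n * w) = 0 := fun n =>
    (mul_eq_zero.mp (by rw [← qBinomialSeries_mul_qPoch a hq hw n, h0, zero_mul])).resolve_left
      (qPoch_ne_zero haw hq.le n)
  have hlim : Tendsto (fun n : ℕ => q ^ n * w) atTop (𝓝 0) := by
    simpa using (tendsto_pow_atTop_nhds_zero_of_norm_lt_one hq).mul_const w
  have := (continuousAt_qBinomialSeries_zero a hq).tendsto.comp hlim
  simp only [Function.comp_def, hzero, qBinomialSeries_zero] at this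
  exact zero_ne_one (tendsto_nhds_unique tendsto_const_nhds this)

lemma heine_transform (a β : ℂ) {q b z : ℂ} (hq : ‖q‖ < 1) (hb : ‖b‖ < 1) (hβb : ‖β * b‖ < 1)
    (hz : ‖z‖ < 1) :
    qBinomialSeries β q b *
        ∑' n : ℕ, qBinomialCoeff a q n * qPoch b q n / qPoch (β * b) q n * z ^ n
      = ∑' m : ℕ, qBinomialCoeff β q m * b ^ m * qBinomialSeries a q (q ^ m * z) := by
  obtain ⟨Ca, hCa⟩ := exists_norm_qBinomialCoeff_le a hq
  obtain ⟨Cβ, hCβ⟩ := exists_norm_qBinomialCoeff_le β hq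
  set F : ℕ → ℕ → ℂ := fun n m =>
    qBinomialCoeff a q n * z ^ n * (qBinomialCoeff β q m * (q ^ n * b) ^ m)
  have hF : Summable (Function.uncurry F) := by
    refine .of_norm_bounded (g := fun p => Ca * ‖z‖ ^ p.1 * (Cβ * ‖b‖ ^ p.2))
      ((summable_geometric_of_lt_one (norm_nonneg z) hz).mul_of_nonneg
        (summable_geometric_of_lt_one (norm_nonneg b) hb) (fun n => by positivity)
        (fun m => by positivity) |>.mul_left (Ca * Cβ) |>.congr fun p => by ring) fun p => ?_
    simp only [Function.uncurry, F, norm_mul, norm_pow]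
    have hqb : ‖q‖ ^ p.1 * ‖b‖ ≤ ‖b‖ := mul_le_of_le_one_left (norm_nonneg b)
      (pow_le_one₀ (norm_nonneg q) hq.le)
    have hCa0 := (norm_nonneg _).trans (hCa 0)
    have hCβ0 := (norm_nonneg _).trans (hCβ 0)
    gcongr
    exacts [hCa p.1, hCβ p.2]
  calc _ = ∑' n : ℕ, qBinomialCoeff a q n * z ^ n * qBinomialSeries β q (q ^ n * b) := by
        rw [← tsum_mul_left]
        refine tsum_congr fun n => ?_
        have h := qBinomialSeries_mul_qPoch β hq hb n
        have hne := qPoch_ne_zero hβb hq.le n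
        rw [mul_comm (q ^ n) b] at h
        field_simp
        linear_combination qBinomialCoeff a q n * z ^ n * h
    _ = ∑' n : ℕ, ∑' m : ℕ, F n m := tsum_congr fun n => by rw [qBinomialSeries, ← tsum_mul_left]
    _ = ∑' m : ℕ, ∑' n : ℕ, F n m := hF.tsum_comm.symm
    _ = _ := tsum_congr fun m => by
        rw [qBinomialSeries, ← tsum_mul_left]
        refine tsum_congr fun n => ?_
        simp only [F]
        rw [mul_pow, mul_pow, ← pow_mul, ← pow_mul, mul_comm n m]
        ring

lemma qPoch_sq (a q : ℂ) (n : ℕ) : qPoch (a ^ 2) (q ^ 2) n = qPoch a q n * qPoch (-a) q n := by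
  rw [qPoch, qPoch, qPoch, ← Finset.prod_mul_distrib]
  exact Finset.prod_congr rfl fun j _ => by ring

lemma phi_eq_tsum {q lam a : ℂ} (ha2 : lam ^ 2 = -a ^ 2) (x : ℂ) :
    phi q lam x
      = ∑' n : ℕ, qBinomialCoeff a q n * qPoch (-a) q n / qPoch (a * q * -a) q n * x ^ n := by
  have h1 : -lam ^ 2 = a ^ 2 := by rw [ha2, neg_neg]
  have h2 : lam ^ 2 * q = a * q * -a := by rw [ha2]; ring
  refine tsum_congr fun n => ?_
  rw [h1, h2, qPoch_sq, qBinomialCoeff]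
  simp only [div_eq_mul_inv, mul_inv]
  ring

lemma norm_mul_mul_neg_lt_one {a q : ℂ} (ha : ‖a‖ < 1) (hq : ‖q‖ ≤ 1) : ‖a * q * -a‖ < 1 := by
  rw [norm_mul, norm_mul, norm_neg]
  exact mul_lt_one_of_nonneg_of_lt_one_left (by positivity)
    ((mul_le_of_le_one_right (norm_nonneg a) hq).trans_lt ha) ha.le

lemma qBinomialSeries_mul_phi {q lam a x : ℂ} (hq : ‖q‖ < 1) (ha : ‖a‖ < 1)
    (ha2 : lam ^ 2 = -a ^ 2) (hx : ‖x‖ < 1) :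
    qBinomialSeries (a * q) q (-a) * phi q lam x
      = ∑' m : ℕ, qBinomialCoeff (a * q) q m * (-a) ^ m * qBinomialSeries a q (q ^ m * x) := by
  rw [phi_eq_tsum ha2,
    heine_transform a (a * q) hq (by rwa [norm_neg]) (norm_mul_mul_neg_lt_one ha hq.le) hx]

noncomputable def qFrac (a q : ℂ) (k : ℕ) : ℂ := (1 - q ^ k) / (1 - a * q ^ k)

lemma qBinomialSeries_pow_succ {a q : ℂ} (ha : ‖a‖ < 1) (hq : ‖q‖ < 1) {k : ℕ} (hk : k ≠ 0) :
    qBinomialSeries a q (q ^ (k + 1)) = qFrac a q k * qBinomialSeries a q (q ^ k) := by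
  have h := one_sub_mul_qBinomialSeries a hq (w := q ^ k)
    (by rw [norm_pow]; exact pow_lt_one₀ (norm_nonneg q) hq hk)
  rw [← pow_succ'] at h
  rw [qFrac, div_mul_eq_mul_div, eq_div_iff (one_sub_mul_pow_ne_zero ha hq.le k)]
  linear_combination -h

lemma one_sub_mul_qBinomialCoeff_mul_qBinomialSeries {a q : ℂ} (ha : ‖a‖ < 1) (hq : ‖q‖ < 1)
    (m : ℕ) :
    (1 - q) * (qBinomialCoeff (a * q) q m * qBinomialSeries a q (q ^ (m + 2)))
      = (1 - a * q) * qBinomialSeries a q (q ^ 2) * qFrac a q (m + 1) := by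
  have h := qBinomialSeries_mul_qPoch a hq (w := q ^ 2)
    (by rw [norm_pow]; exact pow_lt_one₀ (norm_nonneg q) hq two_ne_zero) m
  have hq2 := qPoch_mul_one_sub q q m
  have haq2 := qPoch_mul_one_sub (a * q) q m
  rw [← pow_add] at h
  rw [← sq, ← pow_succ'] at hq2
  rw [mul_assoc, ← sq, mul_assoc a q, ← pow_succ'] at haq2
  have hPq := qPoch_ne_zero hq hq.le m
  have hPaq2 := qPoch_ne_zero ((norm_mul_pow_le hq.le 2).trans_lt ha) hq.le m
  have hden := one_sub_mul_pow_ne_zero ha hq.le (m + 1)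
  rw [qBinomialCoeff, qFrac, div_mul_eq_mul_div, mul_div_assoc', mul_div_assoc',
    div_eq_div_iff hPq hden]
  refine mul_left_cancel₀ hPaq2 ?_
  linear_combination -(1 - q) * (1 - a * q ^ (m + 1)) * qPoch (a * q) q m * h
    + qBinomialSeries a q (q ^ 2) * qPoch (a * q) q m * (1 - a * q ^ (m + 1)) * hq2
    - qBinomialSeries a q (q ^ 2) * qPoch q q m * (1 - q ^ (m + 1)) * haq2

section Specialization

variable {q lam a : ℂ} (hq : ‖q‖ < 1) (ha : ‖a‖ < 1) (ha2 : lam ^ 2 = -a ^ 2)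
include hq ha ha2

lemma one_sub_mul_qBinomialSeries_mul_phi_sq :
    (1 - q) * qBinomialSeries (a * q) q (-a) * phi q lam (q ^ 2)
      = (1 - a * q) * qBinomialSeries a q (q ^ 2) * ∑' m : ℕ, (-a) ^ m * qFrac a q (m + 1) := by
  rw [mul_assoc, qBinomialSeries_mul_phi hq ha ha2
    (by rw [norm_pow]; exact pow_lt_one₀ (norm_nonneg q) hq two_ne_zero),
    ← tsum_mul_left, ← tsum_mul_left]
  refine tsum_congr fun m => ?_
  rw [← pow_add]
  linear_combination (-a) ^ m * one_sub_mul_qBinomialCoeff_mul_qBinomialSeries ha hq m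

lemma one_sub_mul_qBinomialSeries_mul_phi_cube :
    (1 - q) * qBinomialSeries (a * q) q (-a) * phi q lam (q ^ 3)
      = (1 - a * q) * qBinomialSeries a q (q ^ 2) *
          ∑' m : ℕ, (-a) ^ m * (qFrac a q (m + 1) * qFrac a q (m + 2)) := by
  rw [mul_assoc, qBinomialSeries_mul_phi hq ha ha2
    (by rw [norm_pow]; exact pow_lt_one₀ (norm_nonneg q) hq three_ne_zero),
    ← tsum_mul_left, ← tsum_mul_left]
  refine tsum_congr fun m => ?_
  rw [← pow_add, qBinomialSeries_pow_succ ha hq (k := m + 2) (by omega)]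
  linear_combination (-a) ^ m * qFrac a q (m + 2) *
    one_sub_mul_qBinomialCoeff_mul_qBinomialSeries ha hq m

end Specialization

section SeriesIdentities

variable {a q : ℂ} (ha : ‖a‖ < 1) (hq : ‖q‖ ≤ 1)
include ha hq

lemma norm_inv_one_sub_mul_pow_le (k : ℕ) : ‖(1 - a * q ^ k)⁻¹‖ ≤ (1 - ‖a‖)⁻¹ := by
  rw [norm_inv]
  exact inv_anti₀ (sub_pos.mpr ha) (one_sub_norm_le_norm_one_sub_mul_pow hq k)

lemma norm_qFrac_le (k : ℕ) : ‖qFrac a q k‖ ≤ 2 * (1 - ‖a‖)⁻¹ := by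
  have h2 : ‖1 - q ^ k‖ ≤ 2 := by
    calc ‖1 - q ^ k‖ ≤ ‖(1 : ℂ)‖ + ‖q ^ k‖ := norm_sub_le _ _
      _ ≤ 1 + 1 := by rw [norm_one, norm_pow]; gcongr; exact pow_le_one₀ (norm_nonneg q) hq
      _ = 2 := one_add_one_eq_two
  rw [qFrac, div_eq_mul_inv, norm_mul]
  exact mul_le_mul h2 (norm_inv_one_sub_mul_pow_le ha hq k) (norm_nonneg _) zero_le_two

lemma one_sub_sq_mul_tsum_pow_div :
    (1 - a ^ 2) * ∑' k : ℕ, (-a) ^ k / (1 - a * q ^ k)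
      = 1 + a ^ 2 * (1 + a) * ∑' k : ℕ, (-a) ^ k * qFrac a q (k + 1) := by
  have hna : ‖-a‖ < 1 := by rwa [norm_neg]
  have h1a : 1 + a ≠ 0 := by simpa using one_sub_mul_pow_ne_zero hna hq 0
  have hgeo := summable_geometric_of_norm_lt_one hna
  have hW : Summable fun k => (-a) ^ k * qFrac a q k :=
    (summable_norm_pow_mul_of_norm_le hna (norm_qFrac_le ha hq)).of_norm
  have hshift : ∑' k : ℕ, (-a) ^ k * qFrac a q k
      = -a * ∑' k : ℕ, (-a) ^ k * qFrac a q (k + 1) := by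
    rw [hW.tsum_eq_zero_add, ← tsum_mul_left]
    simp only [qFrac, pow_zero, sub_self, zero_div, mul_zero, zero_add]
    exact tsum_congr fun k => by ring
  -- `(1 - a) / (1 - a x) = 1 - a (1 - x) / (1 - a x)`
  have hsplit : (1 - a) * ∑' k : ℕ, (-a) ^ k / (1 - a * q ^ k)
      = ∑' k : ℕ, (-a) ^ k - a * ∑' k : ℕ, (-a) ^ k * qFrac a q k := by
    rw [← tsum_mul_left, ← tsum_mul_left, ← hgeo.tsum_sub (hW.mul_left a)]
    refine tsum_congr fun k => ?_
    have hne := one_sub_mul_pow_ne_zero ha hq k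
    rw [qFrac]
    field_simp
    ring
  rw [tsum_geometric_of_norm_lt_one hna, sub_neg_eq_add, hshift] at hsplit
  linear_combination (1 + a) * hsplit + mul_inv_cancel₀ h1a

lemma one_add_mul_tsum_pow_mul_qFrac :
    (1 + a) * ((1 - a ^ 2) * ∑' k : ℕ, (-a) ^ k * qFrac a q (k + 1)
        + a ^ 2 * (1 - q) * ∑' k : ℕ, (-a) ^ k * (qFrac a q (k + 1) * qFrac a q (k + 2)))
      = 1 - q := by
  have hna : ‖-a‖ < 1 := by rwa [norm_neg]
  have h1a : 1 + a ≠ 0 := by simpa using one_sub_mul_pow_ne_zero hna hq 0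
  have hgeo := summable_geometric_of_norm_lt_one hna
  have hW (c : ℕ) : Summable fun k => (-a) ^ k * qFrac a q (k + c) :=
    (summable_norm_pow_mul_of_norm_le hna fun k => norm_qFrac_le ha hq (k + c)).of_norm
  have hterm (k : ℕ) : a * (1 - q) * (qFrac a q (k + 1) * qFrac a q (k + 2))
      = (a - q) * qFrac a q (k + 1) + (1 - a * q) * qFrac a q (k + 2) - (1 - q) := by
    have h1 := one_sub_mul_pow_ne_zero ha hq (k + 1)
    have h2 := one_sub_mul_pow_ne_zero ha hq (k + 2)
    rw [qFrac, qFrac]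
    field_simp
    ring
  have hsum : a * (1 - q) * ∑' k : ℕ, (-a) ^ k * (qFrac a q (k + 1) * qFrac a q (k + 2))
      = (a - q) * ∑' k : ℕ, (-a) ^ k * qFrac a q (k + 1)
        + (1 - a * q) * ∑' k : ℕ, (-a) ^ k * qFrac a q (k + 2)
        - (1 - q) * ∑' k : ℕ, (-a) ^ k := by
    rw [← tsum_mul_left, ← tsum_mul_left, ← tsum_mul_left, ← tsum_mul_left,
      ← ((hW 1).mul_left _).tsum_add ((hW 2).mul_left _),
      ← (((hW 1).mul_left _).add ((hW 2).mul_left _)).tsum_sub (hgeo.mul_left _)]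
    exact tsum_congr fun k => by linear_combination (-a) ^ k * hterm k
  have hshift : ∑' k : ℕ, (-a) ^ k * qFrac a q (k + 1)
      = qFrac a q 1 - a * ∑' k : ℕ, (-a) ^ k * qFrac a q (k + 2) := by
    rw [(hW 1).tsum_eq_zero_add, ← tsum_mul_left, sub_eq_add_neg, ← tsum_neg, pow_zero, one_mul]
    congr 1
    exact tsum_congr fun k => by ring
  have hq1 : (1 - a * q) * qFrac a q 1 = 1 - q := by
    rw [qFrac, pow_one, mul_div_cancel₀ _ (by simpa using one_sub_mul_pow_ne_zero ha hq 1)]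
  rw [tsum_geometric_of_norm_lt_one hna, sub_neg_eq_add] at hsum
  linear_combination (1 + a) * a * hsum + (1 + a) * (1 - a * q) * hshift + (1 + a) * hq1
    - a * (1 - q) * mul_inv_cancel₀ h1a

end SeriesIdentities

theorem closedForm_qTangent (q lam : ℂ) (hq : ‖q‖ < 1)
    (hlam0 : 0 < ‖lam‖) (hlam1 : ‖lam‖ < 1)
    (hlam2 : 1 + lam ^ 2 ≠ 0)
    (hphi : phi q lam (q ^ 2) ≠ 0)
    (hne : (1 + lam ^ 2) * phi q lam (q ^ 2) ≠ lam ^ 2 * (1 - q) * phi q lam (q ^ 3)) :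
    (Summable fun k : ℕ => ‖(-(I * lam)) ^ k / (1 - I * lam * q ^ k)‖) ∧
    1 / (1 - lam ^ 2 * (1 - q) * phi q lam (q ^ 3) / ((1 + lam ^ 2) * phi q lam (q ^ 2)))
      = (1 + lam ^ 2) *
          (1 - (1 + lam ^ 2) * ∑' k : ℕ, (-(I * lam)) ^ k / (1 - I * lam * q ^ k)) /
            (lam ^ 2 * (1 - q)) := by
  set a := I * lam
  have ha : ‖a‖ < 1 := by rwa [norm_mul, norm_I, one_mul]
  have hna : ‖-a‖ < 1 := by rwa [norm_neg]
  have ha2 : lam ^ 2 = -a ^ 2 := by rw [mul_pow, I_sq]; ring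
  refine ⟨by simpa only [div_eq_mul_inv] using
    summable_norm_pow_mul_of_norm_le hna (norm_inv_one_sub_mul_pow_le ha hq.le), ?_⟩
  have hq1 : 1 - q ≠ 0 := sub_ne_zero.mpr fun h => by simp [← h] at hq
  have hK : (1 - q) * qBinomialSeries (a * q) q (-a) ≠ 0 :=
    mul_ne_zero hq1 (qBinomialSeries_ne_zero (a * q) hq hna (norm_mul_mul_neg_lt_one ha hq.le))
  have h2 := one_sub_mul_qBinomialSeries_mul_phi_sq hq ha ha2
  have h3 := one_sub_mul_qBinomialSeries_mul_phi_cube hq ha ha2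
  have hC := one_sub_sq_mul_tsum_pow_div ha hq.le
  have hD := one_add_mul_tsum_pow_mul_qFrac ha hq.le
  set M := (1 - a * q) * qBinomialSeries a q (q ^ 2)
  set S := ∑' k : ℕ, (-a) ^ k / (1 - a * q ^ k)
  set T₁ := ∑' k : ℕ, (-a) ^ k * qFrac a q (k + 1)
  set T₂ := ∑' k : ℕ, (-a) ^ k * (qFrac a q (k + 1) * qFrac a q (k + 2))
  set X := (1 - a ^ 2) * T₁ + a ^ 2 * (1 - q) * T₂
  set Y := 1 - (1 - a ^ 2) * S
  rw [one_sub_div (mul_ne_zero hlam2 hphi), one_div_div,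
    div_eq_div_iff (sub_ne_zero.mpr hne) (mul_ne_zero (pow_ne_zero 2 (norm_pos_iff.mp hlam0)) hq1)]
  refine mul_left_cancel₀ hK ?_
  rw [ha2]
  -- `hC` and `hD` say `Y = -a²(1+a)T₁` and `(1+a)X = 1-q`, so `X * Y = -a²(1-q)T₁`
  linear_combination ((1 - a ^ 2) * (-a ^ 2) * (1 - q) - (1 - a ^ 2) ^ 2 * Y) * h2
    - (1 - a ^ 2) * Y * a ^ 2 * (1 - q) * h3 + M * (1 - a ^ 2) * (a ^ 2 * T₁ * hD + X * hC)
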